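/- Let H₁, H₂, K₁, K₂ be complex Hilbert spaces and let T₁₁ ∈ B(H₁,K₁), T₁₂ ∈ B(H₂,K₁), T₂₁ ∈ B(H₁,K₂), T₂₂ ∈ B(H₂,K₂). Let T ∈ B(H₁ ⊕ H₂, K₁ ⊕ K₂) be the block operator T(x,y) = (T₁₁x + T₁₂y, T₂₁x + T₂₂y). Assume there exist C ∈ B(H₁,H₂) with T₂₂∘C = T₂₁ and D ∈ B(K₁,K₂) with T₂₂*∘D = T₁₂*, and set Σ = T₁₁ − D*∘T₂₂∘C ∈ B(H₁,K₁). Then: (1) range Σ = { u ∈ K₁ : (u,0) ∈ range T }; and (2) for every x ∈ H₁, Σx = 0 if and only if there exists y ∈ H₂ with T(x,y) = 0. -/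
import Mathlib


/-- The block operator `[[T₁₁, T₁₂],[T₂₁, T₂₂]]` on Hilbert space direct sums. -/
noncomputable def blockCLM {H₁ H₂ K₁ K₂ : Type*}
    [NormedAddCommGroup H₁] [InnerProductSpace ℂ H₁]
    [NormedAddCommGroup H₂] [InnerProductSpace ℂ H₂]
    [NormedAddCommGroup K₁] [InnerProductSpace ℂ K₁]
    [NormedAddCommGroup K₂] [InnerProductSpace ℂ K₂]
    (T₁₁ : H₁ →L[ℂ] K₁) (T₁₂ : H₂ →L[ℂ] K₁)
    (T₂₁ : H₁ →L[ℂ] K₂) (T₂₂ : H₂ →L[ℂ] K₂) :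
    WithLp 2 (H₁ × H₂) →L[ℂ] WithLp 2 (K₁ × K₂) :=
  ((WithLp.prodContinuousLinearEquiv 2 ℂ K₁ K₂).symm.toContinuousLinearMap.comp
    ((T₁₁.comp (ContinuousLinearMap.fst ℂ H₁ H₂) +
        T₁₂.comp (ContinuousLinearMap.snd ℂ H₁ H₂)).prod
      (T₂₁.comp (ContinuousLinearMap.fst ℂ H₁ H₂) +
        T₂₂.comp (ContinuousLinearMap.snd ℂ H₁ H₂)))).comp
    (WithLp.prodContinuousLinearEquiv 2 ℂ H₁ H₂).toContinuousLinearMap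

/-- Hilbert-space case of Corollary 5.7: for an `(M,N)`-complementable operator,
`R(T_{/(M,N)}) = R(T) ∩ N` and `N(T_{/(M,N)}) = M^⊥ + N(T)`, stated for the nonzero block
`Σ = T₁₁ - D* T₂₂ C` of the bilateral shorted operator. -/
theorem range_and_kernel_of_shorted_operator
    {H₁ H₂ K₁ K₂ : Type*}
    [NormedAddCommGroup H₁] [InnerProductSpace ℂ H₁] [CompleteSpace H₁]
    [NormedAddCommGroup H₂] [InnerProductSpace ℂ H₂] [CompleteSpace H₂]
    [NormedAddCommGroup K₁] [InnerProductSpace ℂ K₁] [CompleteSpace K₁]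
    [NormedAddCommGroup K₂] [InnerProductSpace ℂ K₂] [CompleteSpace K₂]
    (T₁₁ : H₁ →L[ℂ] K₁) (T₁₂ : H₂ →L[ℂ] K₁)
    (T₂₁ : H₁ →L[ℂ] K₂) (T₂₂ : H₂ →L[ℂ] K₂)
    (C : H₁ →L[ℂ] H₂) (hC : T₂₂.comp C = T₂₁)
    (D : K₁ →L[ℂ] K₂) (hD : (ContinuousLinearMap.adjoint T₂₂).comp D =
      ContinuousLinearMap.adjoint T₁₂) :
    (Set.range (T₁₁ - ((ContinuousLinearMap.adjoint D).comp T₂₂).comp C) =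
      {u : K₁ |
        (WithLp.equiv 2 (K₁ × K₂)).symm (u, 0) ∈ Set.range (blockCLM T₁₁ T₁₂ T₂₁ T₂₂)}) ∧
    (∀ x : H₁,
      (T₁₁ - ((ContinuousLinearMap.adjoint D).comp T₂₂).comp C) x = 0 ↔
      ∃ y : H₂, blockCLM T₁₁ T₁₂ T₂₁ T₂₂ ((WithLp.equiv 2 (H₁ × H₂)).symm (x, y)) = 0) := by
  -- From hD, by taking adjoints: D* ∘ T₂₂ = T₁₂
  have hD' : (ContinuousLinearMap.adjoint D).comp T₂₂ = T₁₂ := by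
    have h := congrArg ContinuousLinearMap.adjoint hD
    rwa [ContinuousLinearMap.adjoint_comp, ContinuousLinearMap.adjoint_adjoint,
      ContinuousLinearMap.adjoint_adjoint] at h
  have hSigma : ∀ x : H₁,
      (T₁₁ - ((ContinuousLinearMap.adjoint D).comp T₂₂).comp C) x = T₁₁ x - T₁₂ (C x) := by
    intro x
    have := congrFun (congrArg DFunLike.coe hD') (C x)
    simp only [ContinuousLinearMap.sub_apply, ContinuousLinearMap.comp_apply] at *
    rw [this]
  have hblock : ∀ (x : H₁) (y : H₂),
      blockCLM T₁₁ T₁₂ T₂₁ T₂₂ ((WithLp.equiv 2 (H₁ × H₂)).symm (x, y)) =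
        (WithLp.equiv 2 (K₁ × K₂)).symm (T₁₁ x + T₁₂ y, T₂₁ x + T₂₂ y) := by
    intro x y; rfl
  have hC' : ∀ x : H₁, T₂₂ (C x) = T₂₁ x := fun x =>
    congrFun (congrArg DFunLike.coe hC) x
  have hker : ∀ z : H₂, T₂₂ z = 0 → T₁₂ z = 0 := by
    intro z hz
    have := congrFun (congrArg DFunLike.coe hD') z
    simp only [ContinuousLinearMap.comp_apply] at this
    rw [← this, hz, map_zero]
  have hinj : Function.Injective (WithLp.equiv 2 (K₁ × K₂)).symm :=
    (WithLp.equiv 2 (K₁ × K₂)).symm.injective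
  constructor
  · ext u
    simp only [Set.mem_range, Set.mem_setOf_eq]
    constructor
    · rintro ⟨x, rfl⟩
      refine ⟨(WithLp.equiv 2 (H₁ × H₂)).symm (x, -C x), ?_⟩
      rw [hblock, hSigma]
      congr 1
      simp [hC' x, sub_eq_add_neg]
    · rintro ⟨v, hv⟩
      set p := WithLp.equiv 2 (H₁ × H₂) v with hp
      obtain ⟨x, y⟩ := p
      have hv' : blockCLM T₁₁ T₁₂ T₂₁ T₂₂ ((WithLp.equiv 2 (H₁ × H₂)).symm (x, y)) =
          (WithLp.equiv 2 (K₁ × K₂)).symm (u, 0) := by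
        rw [hp, Equiv.symm_apply_apply]; exact hv
      rw [hblock] at hv'
      have h2 := hinj hv'
      have h21 : T₁₁ x + T₁₂ y = u := congrArg Prod.fst h2
      have h22 : T₂₁ x + T₂₂ y = 0 := congrArg Prod.snd h2
      refine ⟨x, ?_⟩
      rw [hSigma]
      have hz : T₂₂ (y + C x) = 0 := by
        rw [map_add, hC' x, add_comm]; exact h22
      have := hker _ hz
      rw [map_add] at this
      have hTy : T₁₂ (C x) = -T₁₂ y := eq_neg_of_add_eq_zero_right this
      rw [hTy, sub_neg_eq_add]
      exact h21
  · intro x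
    rw [hSigma]
    constructor
    · intro h
      refine ⟨-C x, ?_⟩
      rw [hblock]
      have : ((T₁₁ x + T₁₂ (-C x), T₂₁ x + T₂₂ (-C x)) : K₁ × K₂) = (0, 0) := by
        simp [hC' x, ← h, sub_eq_add_neg]
      rw [this]
      simp
    · rintro ⟨y, hy⟩
      rw [hblock] at hy
      have h0 : ((WithLp.equiv 2 (K₁ × K₂)).symm ((0 : K₁), (0 : K₂))) =
          (0 : WithLp 2 (K₁ × K₂)) := by simp
      rw [← h0] at hy
      have h2 := hinj hy
      have h21 : T₁₁ x + T₁₂ y = 0 := congrArg Prod.fst h2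
      have h22 : T₂₁ x + T₂₂ y = 0 := congrArg Prod.snd h2
      have hz : T₂₂ (y + C x) = 0 := by
        rw [map_add, hC' x, add_comm]; exact h22
      have := hker _ hz
      rw [map_add] at this
      have hTy : T₁₂ (C x) = -T₁₂ y := eq_neg_of_add_eq_zero_right this
      rw [hTy, sub_neg_eq_add]
      exact h21
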